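/- For integers κ ≥ 0, J ≥ 1 with κ < J, real T > 0 and real R, the derivative with respect to R of T^{κ-J} Σ_{ι=0}^{J-κ-1} binom(J-κ-1,ι) ((-1)^{J-κ-ι-1}/(2(J-ι)-1)) · (R²/(T+R²))^{J-ι-1/2} equals R^{2κ}/(T+R²)^{J+1/2}, for R > 0. -/

import Mathlib

/-!
With `u = R² / (T + R²)`, the power rule factor `J - ι - 1/2` of the `ι`-th term cancels against
its denominator `2 (J - ι) - 1`, so each term differentiates to
`½ · C(n, ι) (-u)^(n - ι) · u^(κ - 1/2) · u'` where `n = J - κ - 1`. By the binomial theorem the sum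
collapses to `½ u^(κ - 1/2) (1 - u)^n u'`, and `1 - u = T / (T + R²)`, `u' = 2RT / (T + R²)²`
turn this into `T^(J - κ) R^(2κ) / (T + R²)^(J + 1/2)`.
-/

open Real Finset

lemma sum_range_choose_mul_neg_one_pow_mul_pow (n : ℕ) (u : ℝ) :
    ∑ ι ∈ range (n + 1), (n.choose ι : ℝ) * (-1) ^ (n - ι) * u ^ (n - ι) = (1 - u) ^ n := by
  rw [sub_eq_add_neg, add_pow]
  refine sum_congr rfl fun ι _ => ?_
  rw [one_pow, one_mul, neg_pow]
  ring

lemma hasDerivAt_sq_div_add_sq (T R : ℝ) (h : T + R ^ 2 ≠ 0) :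
    HasDerivAt (fun x : ℝ => x ^ 2 / (T + x ^ 2)) (2 * R * T / (T + R ^ 2) ^ 2) R := by
  have hsq : HasDerivAt (fun x : ℝ => x ^ 2) (2 * R) R := by simpa using hasDerivAt_pow 2 R
  exact (hsq.div (hsq.const_add T) h).congr_deriv (by ring)

lemma sq_div_rpow_natCast_sub_half {R s : ℝ} (hR : 0 < R) (hs : 0 < s) (κ : ℕ) :
    (R ^ 2 / s) ^ ((κ : ℝ) - 1 / 2) = R ^ (2 * κ) * √s / (R * s ^ κ) := by
  rw [rpow_sub (by positivity), rpow_natCast, ← sqrt_eq_rpow, sqrt_div' _ hs.le, sqrt_sq hR.le,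
    div_pow, ← pow_mul]
  field_simp

noncomputable def evenPowerPrimitive (κ J : ℕ) (x : ℝ) : ℝ :=
  ∑ ι ∈ range (J - κ),
    ((J - κ - 1).choose ι : ℝ) * ((-1) ^ (J - κ - ι - 1) / (2 * ((J : ℝ) - ι) - 1)) *
      x ^ ((J : ℝ) - ι - 1 / 2)

lemma hasDerivAt_evenPowerPrimitive_term {κ J ι : ℕ} (hι : ι < J - κ) {x : ℝ} (hx : 0 < x) :
    HasDerivAt
      (fun x => ((J - κ - 1).choose ι : ℝ) * ((-1) ^ (J - κ - ι - 1) / (2 * ((J : ℝ) - ι) - 1)) *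
        x ^ ((J : ℝ) - ι - 1 / 2))
      ((J - κ - 1).choose ι * (-1) ^ (J - κ - 1 - ι) * x ^ (J - κ - 1 - ι) *
        (x ^ ((κ : ℝ) - 1 / 2) / 2)) x := by
  refine ((hasDerivAt_rpow_const (Or.inl hx.ne')).const_mul _).congr_deriv ?_
  have hιJ : (ι : ℝ) + κ + 1 ≤ J := by exact_mod_cast (by omega : ι + κ + 1 ≤ J)
  have hexp : (J : ℝ) - ι - 1 / 2 - 1 = ((J - κ - 1 - ι : ℕ) : ℝ) + ((κ : ℝ) - 1 / 2) := by
    rw [Nat.cast_sub (by omega), Nat.cast_sub (by omega), Nat.cast_sub (by omega)]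
    push_cast
    ring
  have hden : 2 * ((J : ℝ) - ι) - 1 ≠ 0 := by linarith
  rw [hexp, rpow_add hx, rpow_natCast, show J - κ - ι - 1 = J - κ - 1 - ι by omega]
  field_simp

lemma hasDerivAt_evenPowerPrimitive {κ J : ℕ} (hκJ : κ < J) {x : ℝ} (hx : 0 < x) :
    HasDerivAt (evenPowerPrimitive κ J)
      (x ^ ((κ : ℝ) - 1 / 2) * (1 - x) ^ (J - κ - 1) / 2) x := by
  refine (HasDerivAt.fun_sum fun ι hι =>
    hasDerivAt_evenPowerPrimitive_term (mem_range.mp hι) hx).congr_deriv ?_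
  obtain ⟨n, hn⟩ : ∃ n, J - κ = n + 1 := ⟨J - κ - 1, by omega⟩
  rw [← sum_mul, hn, Nat.add_sub_cancel, sum_range_choose_mul_neg_one_pow_mul_pow]
  ring

theorem antiderivative_even_power (κ J : ℕ) (hκJ : κ < J) (T R : ℝ) (hT : 0 < T)
    (hR : 0 < R) :
    HasDerivAt
      (fun R : ℝ =>
        T ^ ((κ : ℤ) - J) *
          ∑ ι ∈ Finset.range (J - κ),
            ((J - κ - 1).choose ι : ℝ) * ((-1) ^ (J - κ - ι - 1) / (2 * ((J : ℝ) - ι) - 1)) *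
              (R ^ 2 / (T + R ^ 2)) ^ ((J : ℝ) - ι - 1 / 2))
      (R ^ (2 * κ) / (T + R ^ 2) ^ ((J : ℝ) + 1 / 2)) R := by
  have hs : 0 < T + R ^ 2 := by positivity
  refine (((hasDerivAt_evenPowerPrimitive hκJ (by positivity : 0 < R ^ 2 / (T + R ^ 2))).comp R
    (hasDerivAt_sq_div_add_sq T R hs.ne')).const_mul (T ^ ((κ : ℤ) - J))).congr_deriv ?_
  obtain ⟨n, rfl⟩ : ∃ n, J = κ + n + 1 := ⟨J - κ - 1, by omega⟩
  have hT_zpow : T ^ ((κ : ℤ) - (κ + n + 1 : ℕ)) = (T ^ (n + 1))⁻¹ := by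
    rw [← zpow_natCast, ← zpow_neg]
    push_cast
    ring_nf
  have hs_rpow : (T + R ^ 2) ^ (((κ + n + 1 : ℕ) : ℝ) + 1 / 2) =
      (T + R ^ 2) ^ (κ + n + 1) * √(T + R ^ 2) := by
    rw [rpow_add hs, rpow_natCast, sqrt_eq_rpow]
  have hone_sub : 1 - R ^ 2 / (T + R ^ 2) = T / (T + R ^ 2) := by
    field_simp
    ring
  rw [hT_zpow, hs_rpow, sq_div_rpow_natCast_sub_half hR hs, hone_sub,
    show κ + n + 1 - κ - 1 = n by omega, div_pow]
  field_simp
  rw [sq_sqrt hs.le]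
  ring
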